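/- arXiv:2109.08991 — 5 statements merged into one kernel-verified Lean document; each statement's English description precedes it below -/
import Mathlib

section
/- Let X₁,…,Xₙ be i.i.d. uniform on {0,1}, Y ∈ {0,1}, and suppose H(Xᵢ | X_{[n]∖{i}}, Y) = 0 for all i. Then Y is almost surely equal to a function f of (X₁,…,Xₙ), and this f satisfies f(x₁,…,xₙ) = 1 − f(1−x₁, x₂,…,xₙ) for all x ∈ {0,1}ⁿ. -/
/-!
Write `φ = negMulLog`. For a set `s` of probability `q` and the pieces `s ∩ {A = a}` of
probabilities `p_a`, we have `p_a ≤ q ≤ ∑ p_a ≤ 1`, so `φ q = q (-log q) ≤ ∑ p_a (-log q) ≤ ∑ φ p_a`.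
Hence `H(A | B)` is a sum of nonnegative terms, one for each value `b` of `B`, and it vanishes only
if no fibre `{B = b}` meets two values of `A` with positive mass (strictness needs that mass to be
`< 1`, since `μ` is only subadditive on non-measurable sets).

Applied to `A = X₀` and `B = ((Xⱼ)_{j ≠ 0}, Y)`, this says that `{X = x, Y = y}` and
`{X = x', Y = y}` cannot both have positive mass, where `x'` is `x` with its first bit flipped.
Every fibre `{X = x}` has positive mass, so it carries some value `f x` of `Y`; it cannot carry
both values, for then `{X = x'}` would carry none. So `Y = f X` almost surely and `f x' ≠ f x`.
-/

open MeasureTheory ENNReal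

/-- Shannon entropy (in nats) of a finitely-valued random variable. -/
noncomputable def ent {Ω α : Type*} [MeasurableSpace Ω] [Fintype α]
    (μ : Measure Ω) (X : Ω → α) : ℝ :=
  ∑ a : α, Real.negMulLog ((μ (X ⁻¹' {a})).toReal)

/-- Conditional Shannon entropy H(X | Y) = H(X, Y) - H(Y). -/
noncomputable def condEnt {Ω α β : Type*} [MeasurableSpace Ω] [Fintype α] [Fintype β]
    (μ : Measure Ω) (X : Ω → α) (Y : Ω → β) : ℝ :=
  ent μ (fun ω => (X ω, Y ω)) - ent μ Y

open Real Set

lemma ZMod.two_ne_iff_eq_one_add {a b : ZMod 2} : a ≠ b ↔ a = 1 + b := by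
  revert a b; decide

lemma mul_neg_log_le_negMulLog {p q : ℝ} (hp : 0 ≤ p) (hpq : p ≤ q) :
    p * -log q ≤ negMulLog p := by
  rcases hp.eq_or_lt with rfl | hp
  · simp
  · rw [negMulLog, neg_mul_comm]
    exact mul_le_mul_of_nonneg_left (neg_le_neg (log_le_log hp hpq)) hp.le

lemma mul_neg_log_lt_negMulLog {p q : ℝ} (hp : 0 < p) (hpq : p < q) :
    p * -log q < negMulLog p := by
  rw [negMulLog, neg_mul_comm]
  exact mul_lt_mul_of_pos_left (neg_lt_neg (log_lt_log hp hpq)) hp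

section NegMulLog

variable {ι : Type*} [Fintype ι] {p : ι → ℝ} {q : ℝ}

lemma negMulLog_le_sum_negMulLog (hq : 0 ≤ q) (hq1 : q ≤ 1) (hp : ∀ i, 0 ≤ p i)
    (hpq : ∀ i, p i ≤ q) (hqp : q ≤ ∑ i, p i) :
    negMulLog q ≤ ∑ i, negMulLog (p i) :=
  calc negMulLog q = q * -log q := by rw [negMulLog, neg_mul_comm]
    _ ≤ (∑ i, p i) * -log q := mul_le_mul_of_nonneg_right hqp (neg_nonneg.2 (log_nonpos hq hq1))
    _ = ∑ i, p i * -log q := Finset.sum_mul ..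
    _ ≤ ∑ i, negMulLog (p i) :=
      Finset.sum_le_sum fun i _ => mul_neg_log_le_negMulLog (hp i) (hpq i)

lemma negMulLog_lt_sum_negMulLog (hq1 : q ≤ 1) (hp : ∀ i, 0 ≤ p i) (hpq : ∀ i, p i ≤ q)
    (hqp : q ≤ ∑ i, p i) {i j : ι} (hij : i ≠ j) (hi : 0 < p i) (hj : 0 < p j) (hi1 : p i < 1) :
    negMulLog q < ∑ k, negMulLog (p k) := by
  have hterm (k : ι) : p k * -log q ≤ negMulLog (p k) := mul_neg_log_le_negMulLog (hp k) (hpq k)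
  rw [negMulLog, neg_mul_comm]
  rcases (hpq i).lt_or_eq with hlt | rfl
  · calc q * -log q ≤ (∑ k, p k) * -log q :=
          mul_le_mul_of_nonneg_right hqp (neg_nonneg.2 (log_nonpos (hi.trans hlt).le hq1))
      _ = ∑ k, p k * -log q := Finset.sum_mul ..
      _ < ∑ k, negMulLog (p k) := Finset.sum_lt_sum (fun k _ => hterm k)
          ⟨i, Finset.mem_univ i, mul_neg_log_lt_negMulLog hi hlt⟩
  · -- here `q = p i < 1`, so `-log q > 0`, and `p j > 0` makes `q ≤ ∑ p` strict
    have hsum : p i < ∑ k, p k := by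
      linarith [Finset.add_le_sum (fun k _ => hp k) (Finset.mem_univ i) (Finset.mem_univ j) hij]
    calc p i * -log (p i) < (∑ k, p k) * -log (p i) :=
          mul_lt_mul_of_pos_right hsum (neg_pos.2 (log_neg hi hi1))
      _ = ∑ k, p k * -log (p i) := Finset.sum_mul ..
      _ ≤ ∑ k, negMulLog (p k) := Finset.sum_le_sum fun k _ => hterm k

end NegMulLog

lemma preimage_coord_inter_preimage_rest_eq {Ω α β γ : Type*} [DecidableEq α] (X : Ω → α → γ)
    (Y : Ω → β) (x : α → γ) (i : α) (a : γ) (y : β) :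
    (fun ω => X ω i) ⁻¹' {a} ∩
        (fun ω => ((fun j : {j // j ≠ i} => X ω j.1), Y ω)) ⁻¹' {((fun j => x j.1), y)} =
      X ⁻¹' {Function.update x i a} ∩ Y ⁻¹' {y} := by
  ext ω
  simp only [mem_inter_iff, mem_preimage, mem_singleton_iff, Prod.mk.injEq,
    Function.eq_update_iff]
  simp [funext_iff, and_assoc]

section Measure

variable {Ω α β γ : Type*} [MeasurableSpace Ω] {μ : Measure Ω}

lemma measureReal_le_sum_measureReal_preimage_inter [IsFiniteMeasure μ] [Fintype α]
    (A : Ω → α) (s : Set Ω) : μ.real s ≤ ∑ a, μ.real (A ⁻¹' {a} ∩ s) :=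
  (measureReal_mono (s₂ := ⋃ a, A ⁻¹' {a} ∩ s) fun ω hω => mem_iUnion.2 ⟨A ω, rfl, hω⟩).trans
    (measureReal_iUnion_fintype_le _)

lemma negMulLog_measureReal_le_sum [IsProbabilityMeasure μ] [Fintype α] (A : Ω → α)
    (s : Set Ω) : negMulLog (μ.real s) ≤ ∑ a, negMulLog (μ.real (A ⁻¹' {a} ∩ s)) :=
  negMulLog_le_sum_negMulLog measureReal_nonneg measureReal_le_one (fun _ => measureReal_nonneg)
    (fun _ => measureReal_mono inter_subset_right)
    (measureReal_le_sum_measureReal_preimage_inter A s)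

lemma negMulLog_measureReal_lt_sum [IsProbabilityMeasure μ] [Fintype α] (A : Ω → α)
    (s : Set Ω) {a a' : α} (ha : a ≠ a') (h : μ (A ⁻¹' {a} ∩ s) ≠ 0)
    (h' : μ (A ⁻¹' {a'} ∩ s) ≠ 0) (h1 : μ (A ⁻¹' {a} ∩ s) < 1) :
    negMulLog (μ.real s) < ∑ a, negMulLog (μ.real (A ⁻¹' {a} ∩ s)) :=
  negMulLog_lt_sum_negMulLog measureReal_le_one (fun _ => measureReal_nonneg)
    (fun _ => measureReal_mono inter_subset_right)
    (measureReal_le_sum_measureReal_preimage_inter A s) ha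
    (ENNReal.toReal_pos h (measure_ne_top _ _)) (ENNReal.toReal_pos h' (measure_ne_top _ _))
    (by simpa [measureReal_def] using ENNReal.toReal_strict_mono ENNReal.one_ne_top h1)

lemma condEnt_eq_sum [Fintype α] [Fintype β] (μ : Measure Ω) (A : Ω → α) (B : Ω → β) :
    condEnt μ A B = ∑ b, (∑ a, negMulLog (μ.real (A ⁻¹' {a} ∩ B ⁻¹' {b})) -
      negMulLog (μ.real (B ⁻¹' {b}))) := by
  rw [condEnt, ent, ent, Fintype.sum_prod_type, Finset.sum_comm, ← Finset.sum_sub_distrib]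
  simp only [← singleton_prod_singleton, mk_preimage_prod]
  rfl

lemma measure_preimage_inter_eq_zero_or_of_condEnt_eq_zero [IsProbabilityMeasure μ] [Fintype α]
    [Fintype β] {A : Ω → α} {B : Ω → β} (h : condEnt μ A B = 0) (b : β) {a a' : α}
    (ha : a ≠ a') (h1 : μ (A ⁻¹' {a} ∩ B ⁻¹' {b}) < 1) :
    μ (A ⁻¹' {a} ∩ B ⁻¹' {b}) = 0 ∨ μ (A ⁻¹' {a'} ∩ B ⁻¹' {b}) = 0 := by
  by_contra! ⟨h0, h0'⟩
  have hb := (Finset.sum_eq_zero_iff_of_nonneg fun b _ =>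
    sub_nonneg.2 (negMulLog_measureReal_le_sum A (B ⁻¹' {b}))).1
    ((condEnt_eq_sum μ A B).symm.trans h) b (Finset.mem_univ b)
  linarith [negMulLog_measureReal_lt_sum A (B ⁻¹' {b}) ha h0 h0' h1]

lemma measure_preimage_inter_eq_zero_or_update [IsProbabilityMeasure μ] [Fintype α]
    [DecidableEq α] [Fintype β] [Fintype γ] {X : Ω → α → γ} {Y : Ω → β} {i : α}
    (h : condEnt μ (fun ω => X ω i) (fun ω => ((fun j : {j // j ≠ i} => X ω j.1), Y ω)) = 0)
    (x : α → γ) (y : β) {a : γ} (ha : a ≠ x i) (hx : μ (X ⁻¹' {x} ∩ Y ⁻¹' {y}) < 1) :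
    μ (X ⁻¹' {x} ∩ Y ⁻¹' {y}) = 0 ∨ μ (X ⁻¹' {Function.update x i a} ∩ Y ⁻¹' {y}) = 0 := by
  have hfibre := preimage_coord_inter_preimage_rest_eq X Y x i (x i) y
  rw [Function.update_eq_self] at hfibre
  have hzero := measure_preimage_inter_eq_zero_or_of_condEnt_eq_zero h ((fun j => x j.1), y)
    ha.symm (hfibre ▸ hx)
  rwa [hfibre, preimage_coord_inter_preimage_rest_eq] at hzero

lemma exists_measure_inter_preimage_ne_zero [Countable β] {s : Set Ω} (Y : Ω → β)
    (h : μ s ≠ 0) : ∃ y, μ (s ∩ Y ⁻¹' {y}) ≠ 0 := by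
  by_contra! h'
  exact h (measure_mono_null (t := ⋃ y, s ∩ Y ⁻¹' {y})
    (fun ω hω => mem_iUnion.2 ⟨Y ω, hω, rfl⟩) (measure_iUnion_null h'))

lemma ae_eq_comp_of_measure_preimage_inter_eq_zero [Countable α] [Countable β] {X : Ω → α}
    {Y : Ω → β} {f : α → β} (h : ∀ x y, y ≠ f x → μ (X ⁻¹' {x} ∩ Y ⁻¹' {y}) = 0) :
    ∀ᵐ ω ∂μ, Y ω = f (X ω) := by
  have hxy (x : α) (y : β) : ∀ᵐ ω ∂μ, X ω = x → Y ω = y → y = f x := by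
    by_cases hy : y = f x
    · exact ae_of_all _ fun _ _ _ => hy
    · exact ae_iff.2 (measure_mono_null (fun ω hω => by simp_all) (h x y hy))
  filter_upwards [ae_all_iff.2 fun x => ae_all_iff.2 (hxy x)] with ω hω
  exact hω _ _ rfl rfl

lemma exists_ae_eq_comp_and_comp_ne_of_zero_or_zero [Countable α] {X : Ω → α} {Y : Ω → ZMod 2}
    (σ : α → α) (hX : ∀ x, μ (X ⁻¹' {x}) ≠ 0)
    (hσ : ∀ x y, μ (X ⁻¹' {x} ∩ Y ⁻¹' {y}) = 0 ∨ μ (X ⁻¹' {σ x} ∩ Y ⁻¹' {y}) = 0) :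
    ∃ f : α → ZMod 2, (∀ᵐ ω ∂μ, Y ω = f (X ω)) ∧ ∀ x, f (σ x) ≠ f x := by
  choose f hf using fun x => exists_measure_inter_preimage_ne_zero Y (hX x)
  -- if the fibre over `x` carried both values, the fibre over `σ x` would carry none
  have hf_unique (x : α) (y : ZMod 2) (hy : y ≠ f x) : μ (X ⁻¹' {x} ∩ Y ⁻¹' {y}) = 0 := by
    by_contra hne
    obtain ⟨z, hz⟩ := exists_measure_inter_preimage_ne_zero Y (hX (σ x))
    obtain rfl | hzf := eq_or_ne z (f x)
    · exact hz ((hσ x _).resolve_left (hf x))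
    · rw [ZMod.two_ne_iff_eq_one_add] at hy hzf
      exact hz ((hσ x z).resolve_left (hzf.trans hy.symm ▸ hne))
  refine ⟨f, ae_eq_comp_of_measure_preimage_inter_eq_zero hf_unique, fun x hx => ?_⟩
  exact (hσ x (f x)).elim (hf x) (hx ▸ hf (σ x))

end Measure

/-- under the XOR-checker hypotheses, `Y` is a.s. a function `f` of
`(X₁,…,Xₙ)`, and `f` flips its value when the first coordinate is flipped. -/
theorem stmt1 {Ω : Type*} [MeasurableSpace Ω] (μ : Measure Ω) [IsProbabilityMeasure μ]
    (n : ℕ) (hn : 0 < n) (X : Ω → Fin n → ZMod 2) (Y : Ω → ZMod 2)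
    (hX : ∀ x : Fin n → ZMod 2, μ (X ⁻¹' {x}) = (2 : ℝ≥0∞)⁻¹ ^ n)
    (hH : ∀ i : Fin n,
        condEnt μ (fun ω => X ω i)
          (fun ω => ((fun j : {j : Fin n // j ≠ i} => X ω j.1), Y ω)) = 0) :
    ∃ f : (Fin n → ZMod 2) → ZMod 2,
      (∀ᵐ ω ∂μ, Y ω = f (X ω)) ∧
      (∀ x : Fin n → ZMod 2,
        f x = 1 + f (Function.update x ⟨0, hn⟩ (1 + x ⟨0, hn⟩))) := by
  set i : Fin n := ⟨0, hn⟩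
  have hX_ne (x : Fin n → ZMod 2) : μ (X ⁻¹' {x}) ≠ 0 := by simp [hX]
  have hX_lt (x : Fin n → ZMod 2) : μ (X ⁻¹' {x}) < 1 := by
    rw [hX]
    exact pow_lt_one₀ (by simp) (ENNReal.inv_lt_one.2 one_lt_two) hn.ne'
  have hflip (x : Fin n → ZMod 2) (y : ZMod 2) : μ (X ⁻¹' {x} ∩ Y ⁻¹' {y}) = 0 ∨
      μ (X ⁻¹' {Function.update x i (1 + x i)} ∩ Y ⁻¹' {y}) = 0 :=
    measure_preimage_inter_eq_zero_or_update (hH i) x y (ZMod.two_ne_iff_eq_one_add.2 rfl)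
      ((measure_mono inter_subset_left).trans_lt (hX_lt x))
  obtain ⟨f, hYf, hf⟩ := exists_ae_eq_comp_and_comp_ne_of_zero_or_zero _ hX_ne hflip
  exact ⟨f, hYf, fun x => ZMod.two_ne_iff_eq_one_add.1 (hf x).symm⟩
end

section
/- Let M₀, M₁ be i.i.d. uniform on {0,1} and Z₀, Z₁ be {0,1}-valued random variables on the same space. If H(M₀,M₁ | Z₀,Z₁) = 0, H(M₀,M₁ | Z₀, M₀⊕M₁) = 0, and H(M₀,M₁ | Z₁, M₀⊕M₁) = 0, then, up to relabelling of the values of Z₀ and Z₁ (i.e., after possibly replacing Z₀ by 1−Z₀ and/or Z₁ by 1−Z₁), either (Z₀,Z₁) = (M₀,M₁) a.s. or (Z₀,Z₁) = (M₁,M₀) a.s. -/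
open MeasureTheory ENNReal

namespace Stmt5Aux

open Real

lemma log_four : (1:ℝ) ≤ Real.log 4 := by
  rw [Real.le_log_iff_exp_le (by norm_num)]
  have := Real.exp_one_lt_d9
  linarith

lemma negMulLog_mono {a b : ℝ} (h0 : 0 ≤ a) (hab : a ≤ b) (hb : b ≤ 4⁻¹) :
    negMulLog a ≤ negMulLog b := by
  rcases eq_or_lt_of_le h0 with h0' | h0'
  · simp only [← h0', negMulLog_zero]
    exact negMulLog_nonneg (le_trans h0 hab) (by linarith)
  · have hb0 : 0 < b := lt_of_lt_of_le h0' hab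
    have hlogb : Real.log b ≤ -1 := by
      have h4 : Real.log b ≤ Real.log 4⁻¹ := Real.log_le_log hb0 hb
      have : Real.log (4:ℝ)⁻¹ = - Real.log 4 := Real.log_inv 4
      have := log_four
      linarith
    have h1 : Real.log (b / a) ≤ b / a - 1 := Real.log_le_sub_one_of_pos (by positivity)
    have h2 : Real.log (b / a) = Real.log b - Real.log a :=
      Real.log_div (ne_of_gt hb0) (ne_of_gt h0')
    have h3 : a * (Real.log b - Real.log a) ≤ b - a := by
      rw [← h2]
      have := mul_le_mul_of_nonneg_left h1 (le_of_lt h0')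
      rw [mul_sub, mul_one, mul_div_cancel₀ _ (ne_of_gt h0')] at this
      linarith
    have hint : (0:ℝ) ≤ (b - a) * (- Real.log b - 1) :=
      mul_nonneg (by linarith) (by linarith)
    simp only [negMulLog, neg_mul]
    nlinarith [hint, h3]

lemma negMulLog_subadd {a b : ℝ} (ha : 0 ≤ a) (hb : 0 ≤ b) :
    negMulLog (a + b) ≤ negMulLog a + negMulLog b := by
  rcases eq_or_lt_of_le ha with ha' | ha'
  · simp [← ha']
  rcases eq_or_lt_of_le hb with hb' | hb'
  · simp [← hb']
  have hA : Real.log a ≤ Real.log (a + b) := Real.log_le_log ha' (by linarith)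
  have hB : Real.log b ≤ Real.log (a + b) := Real.log_le_log hb' (by linarith)
  simp only [negMulLog, neg_mul]
  nlinarith [mul_le_mul_of_nonneg_left hA ha, mul_le_mul_of_nonneg_left hB hb]

lemma negMulLog_subadd_strict {a b : ℝ} (ha : 0 < a) (hb : 0 < b) :
    negMulLog (a + b) < negMulLog a + negMulLog b := by
  have hA : Real.log a < Real.log (a + b) := Real.log_lt_log ha (by linarith)
  have hB : Real.log b ≤ Real.log (a + b) := Real.log_le_log hb (by linarith)
  simp only [negMulLog, neg_mul]
  nlinarith [mul_lt_mul_of_pos_left hA ha, mul_le_mul_of_nonneg_left hB hb.le]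

lemma lemA {ι : Type*} (s : Finset ι) (p : ι → ℝ) (hp : ∀ i, 0 ≤ p i)
    (hp' : ∀ i, p i ≤ 4⁻¹) {r : ℝ} (h0 : 0 ≤ r) (h1 : r ≤ 1)
    (hle : r ≤ ∑ i ∈ s, p i) :
    negMulLog r ≤ ∑ i ∈ s, negMulLog (p i) := by
  induction s using Finset.cons_induction generalizing r with
  | empty =>
    simp only [Finset.sum_empty] at hle ⊢
    have : r = 0 := le_antisymm hle h0
    simp [this]
  | cons a s ha ih =>
    rw [Finset.sum_cons] at hle ⊢
    rcases le_or_gt r (p a) with h | h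
    · have h1' : negMulLog r ≤ negMulLog (p a) := negMulLog_mono h0 h (hp' a)
      have h2' : 0 ≤ ∑ i ∈ s, negMulLog (p i) :=
        Finset.sum_nonneg fun i _ => negMulLog_nonneg (hp i) ((hp' i).trans (by norm_num))
      linarith
    · have key : negMulLog r ≤ negMulLog (p a) + negMulLog (r - p a) := by
        have := negMulLog_subadd (hp a) (by linarith : (0:ℝ) ≤ r - p a)
        simpa using this
      have hpa := hp a
      have := ih (r := r - p a) (by linarith) (by linarith) (by linarith)
      linarith

lemma lemB {ι : Type*} [DecidableEq ι] (s : Finset ι) (p : ι → ℝ) (hp : ∀ i, 0 ≤ p i)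
    (hp' : ∀ i, p i ≤ 4⁻¹) {r : ℝ} (h1 : r ≤ 1) (hle : r ≤ ∑ i ∈ s, p i)
    {i j : ι} (hi : i ∈ s) (hj : j ∈ s) (hij : i ≠ j)
    (hpi : 0 < p i) (hpj : 0 < p j) (hir : p i ≤ r) :
    negMulLog r < ∑ i ∈ s, negMulLog (p i) := by
  have hsplit : ∑ k ∈ s, negMulLog (p k) =
      negMulLog (p i) + ∑ k ∈ s.erase i, negMulLog (p k) :=
    (Finset.add_sum_erase s (fun k => negMulLog (p k)) hi).symm
  have hsplitp : ∑ k ∈ s, p k = p i + ∑ k ∈ s.erase i, p k :=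
    (Finset.add_sum_erase s p hi).symm
  rcases eq_or_lt_of_le hir with h | h
  · have hjpos : 0 < negMulLog (p j) := by
      have hlt : p j < 1 := lt_of_le_of_lt (hp' j) (by norm_num)
      have hlog := Real.log_neg hpj hlt
      simp only [negMulLog, neg_mul]
      nlinarith
    have hjmem : j ∈ s.erase i := Finset.mem_erase.2 ⟨hij.symm, hj⟩
    have hrest : negMulLog (p j) ≤ ∑ k ∈ s.erase i, negMulLog (p k) := by
      refine Finset.single_le_sum (f := fun k => negMulLog (p k)) (fun k _ => ?_) hjmem
      exact negMulLog_nonneg (hp k) ((hp' k).trans (by norm_num))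
    rw [hsplit, ← h]
    linarith
  · have key : negMulLog r < negMulLog (p i) + negMulLog (r - p i) := by
      have := negMulLog_subadd_strict hpi (by linarith : (0:ℝ) < r - p i)
      simpa using this
    have h2 : negMulLog (r - p i) ≤ ∑ k ∈ s.erase i, negMulLog (p k) := by
      refine lemA _ _ hp hp' (by linarith) (by linarith) ?_
      rw [hsplitp] at hle; linarith
    rw [hsplit]
    linarith

/-- From zero conditional entropy, X is determined by Y on sets of positive measure. -/
lemma determ {Ω α β : Type*} [MeasurableSpace Ω] (μ : Measure Ω) [IsProbabilityMeasure μ]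
    [Fintype α] [Fintype β] [DecidableEq α]
    (X : Ω → α) (Y : Ω → β)
    (hX : ∀ x, μ (X ⁻¹' {x}) ≤ (4 : ℝ≥0∞)⁻¹)
    (h : condEnt μ X Y = 0) :
    ∀ y x x', μ (X ⁻¹' {x} ∩ Y ⁻¹' {y}) ≠ 0 → μ (X ⁻¹' {x'} ∩ Y ⁻¹' {y}) ≠ 0 → x = x' := by
  classical
  set P : α → β → ℝ := fun x y => (μ (X ⁻¹' {x} ∩ Y ⁻¹' {y})).toReal with hP
  set R : β → ℝ := fun y => (μ (Y ⁻¹' {y})).toReal with hR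
  have hPnn : ∀ x y, 0 ≤ P x y := fun x y => ENNReal.toReal_nonneg
  have hP4 : ∀ x y, P x y ≤ 4⁻¹ := by
    intro x y
    have h1 : μ (X ⁻¹' {x} ∩ Y ⁻¹' {y}) ≤ (4:ℝ≥0∞)⁻¹ :=
      le_trans (measure_mono Set.inter_subset_left) (hX x)
    have := ENNReal.toReal_mono (by simp) h1
    simpa using this
  have hPR : ∀ x y, P x y ≤ R y := by
    intro x y
    exact ENNReal.toReal_mono (measure_ne_top μ _)
      (measure_mono Set.inter_subset_right)
  have hR1 : ∀ y, R y ≤ 1 := by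
    intro y
    have := prob_le_one (μ := μ) (s := Y ⁻¹' {y})
    have := ENNReal.toReal_mono (by simp) this
    simpa using this
  have hRsum : ∀ y, R y ≤ ∑ x : α, P x y := by
    intro y
    have hsub : Y ⁻¹' {y} ⊆ ⋃ x : α, (X ⁻¹' {x} ∩ Y ⁻¹' {y}) := by
      intro ω hω
      exact Set.mem_iUnion.2 ⟨X ω, ⟨rfl, hω⟩⟩
    have h1 : μ (Y ⁻¹' {y}) ≤ ∑ x : α, μ (X ⁻¹' {x} ∩ Y ⁻¹' {y}) :=
      le_trans (measure_mono hsub) (measure_iUnion_fintype_le _ _)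
    have hfin : (∑ x : α, μ (X ⁻¹' {x} ∩ Y ⁻¹' {y})) ≠ ⊤ :=
      ENNReal.sum_ne_top.2 fun a _ => measure_ne_top μ _
    have h3 := ENNReal.toReal_mono hfin h1
    rw [ENNReal.toReal_sum (fun a _ => measure_ne_top μ _)] at h3
    exact h3
  have hpre : ∀ (x : α) (y : β), (fun ω => (X ω, Y ω)) ⁻¹' {(x, y)} = X ⁻¹' {x} ∩ Y ⁻¹' {y} := by
    intro x y
    ext ω
    simp [Prod.ext_iff]
  have e1 : ent μ (fun ω => (X ω, Y ω)) = ∑ y : β, ∑ x : α, Real.negMulLog (P x y) := by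
    rw [ent, Fintype.sum_prod_type, Finset.sum_comm]
    refine Finset.sum_congr rfl fun y _ => Finset.sum_congr rfl fun x _ => ?_
    rw [hpre]
  have e2 : ent μ Y = ∑ y : β, Real.negMulLog (R y) := rfl
  have h0 : ∑ y : β, (∑ x : α, Real.negMulLog (P x y) - Real.negMulLog (R y)) = 0 := by
    rw [Finset.sum_sub_distrib]
    rw [condEnt, e1, e2] at h
    linarith
  have hnonneg : ∀ y ∈ (Finset.univ : Finset β),
      0 ≤ ∑ x : α, Real.negMulLog (P x y) - Real.negMulLog (R y) := by
    intro y _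
    have := lemA Finset.univ (fun x => P x y) (fun x => hPnn x y) (fun x => hP4 x y)
      (ENNReal.toReal_nonneg) (hR1 y) (hRsum y)
    linarith
  have hzero := (Finset.sum_eq_zero_iff_of_nonneg hnonneg).1 h0
  intro y x x' hx hx'
  by_contra hne
  have hPx : 0 < P x y := ENNReal.toReal_pos hx (measure_ne_top μ _)
  have hPx' : 0 < P x' y := ENNReal.toReal_pos hx' (measure_ne_top μ _)
  have hlt := lemB (Finset.univ : Finset α) (fun x => P x y) (fun x => hPnn x y)
    (fun x => hP4 x y) (hR1 y) (hRsum y) (Finset.mem_univ x) (Finset.mem_univ x')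
    hne hPx hPx' (hPR x y)
  have heq := hzero y (Finset.mem_univ y)
  linarith

set_option maxRecDepth 10000 in
lemma comb : ∀ f : ZMod 2 × ZMod 2 → ZMod 2 × ZMod 2, Function.Injective f →
    (f (0,0)).1 ≠ (f (1,1)).1 → (f (0,1)).1 ≠ (f (1,0)).1 →
    (f (0,0)).2 ≠ (f (1,1)).2 → (f (0,1)).2 ≠ (f (1,0)).2 →
    ∃ η₀ η₁ θ : ZMod 2, ∀ m : ZMod 2 × ZMod 2,
      f m = ((if θ = 0 then m.1 else m.2) + η₀, (if θ = 0 then m.2 else m.1) + η₁) := by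
  decide

end Stmt5Aux

/-- the switch lemma. -/
theorem stmt5 {Ω : Type*} [MeasurableSpace Ω] (μ : Measure Ω) [IsProbabilityMeasure μ]
    (M₀ M₁ Z₀ Z₁ : Ω → ZMod 2)
    (hM : ∀ a b : ZMod 2, μ {ω | M₀ ω = a ∧ M₁ ω = b} = (4 : ℝ≥0∞)⁻¹)
    (h1 : condEnt μ (fun ω => (M₀ ω, M₁ ω)) (fun ω => (Z₀ ω, Z₁ ω)) = 0)
    (h2 : condEnt μ (fun ω => (M₀ ω, M₁ ω)) (fun ω => (Z₀ ω, M₀ ω + M₁ ω)) = 0)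
    (h3 : condEnt μ (fun ω => (M₀ ω, M₁ ω)) (fun ω => (Z₁ ω, M₀ ω + M₁ ω)) = 0) :
    ∃ η₀ η₁ θ : ZMod 2,
      ∀ᵐ ω ∂μ,
        Z₀ ω = (if θ = 0 then M₀ ω else M₁ ω) + η₀ ∧
        Z₁ ω = (if θ = 0 then M₁ ω else M₀ ω) + η₁ := by
  classical
  set Mp : Ω → ZMod 2 × ZMod 2 := fun ω => (M₀ ω, M₁ ω) with hMp
  set Zp : Ω → ZMod 2 × ZMod 2 := fun ω => (Z₀ ω, Z₁ ω) with hZp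
  set Y₂ : Ω → ZMod 2 × ZMod 2 := fun ω => (Z₀ ω, M₀ ω + M₁ ω) with hY₂
  set Y₃ : Ω → ZMod 2 × ZMod 2 := fun ω => (Z₁ ω, M₀ ω + M₁ ω) with hY₃
  have hMeq : ∀ m : ZMod 2 × ZMod 2, Mp ⁻¹' {m} = {ω | M₀ ω = m.1 ∧ M₁ ω = m.2} := by
    intro m; ext ω; simp [hMp, Prod.ext_iff]
  have hX : ∀ m : ZMod 2 × ZMod 2, μ (Mp ⁻¹' {m}) ≤ (4 : ℝ≥0∞)⁻¹ := by
    intro m; rw [hMeq]; rw [hM m.1 m.2]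
  have D1 := Stmt5Aux.determ μ Mp Zp hX h1
  have D2 := Stmt5Aux.determ μ Mp Y₂ hX h2
  have D3 := Stmt5Aux.determ μ Mp Y₃ hX h3
  have hex : ∀ m : ZMod 2 × ZMod 2, ∃ z, μ (Mp ⁻¹' {m} ∩ Zp ⁻¹' {z}) ≠ 0 := by
    intro m
    by_contra hc
    push_neg at hc
    have hsub : Mp ⁻¹' {m} ⊆ ⋃ z : ZMod 2 × ZMod 2, (Mp ⁻¹' {m} ∩ Zp ⁻¹' {z}) :=
      fun ω hω => Set.mem_iUnion.2 ⟨Zp ω, hω, rfl⟩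
    have h1' : μ (Mp ⁻¹' {m}) ≤ ∑ z : ZMod 2 × ZMod 2, μ (Mp ⁻¹' {m} ∩ Zp ⁻¹' {z}) :=
      le_trans (measure_mono hsub) (measure_iUnion_fintype_le _ _)
    have hμm : μ (Mp ⁻¹' {m}) = (4:ℝ≥0∞)⁻¹ := by rw [hMeq]; exact hM m.1 m.2
    rw [hμm] at h1'
    simp only [hc, Finset.sum_const_zero, nonpos_iff_eq_zero] at h1'
    exact (by norm_num : ((4:ℝ≥0∞)⁻¹) ≠ 0) h1'
  choose f hf using hex
  have finj : Function.Injective f := fun m m' h => D1 (f m) m m' (hf m) (h ▸ hf m')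
  have fsurj : Function.Surjective f := Finite.surjective_of_injective finj
  have hvan : ∀ m z, z ≠ f m → μ (Mp ⁻¹' {m} ∩ Zp ⁻¹' {z}) = 0 := by
    intro m z hz
    by_contra hpos
    obtain ⟨m', rfl⟩ := fsurj z
    have := D1 (f m') m m' hpos (hf m')
    exact hz (by rw [this])
  have claim2 : ∀ m m' : ZMod 2 × ZMod 2, m ≠ m' → m.1 + m.2 = m'.1 + m'.2 →
      (f m).1 ≠ (f m').1 := by
    intro m m' hne hsum hc
    have key : ∀ k : ZMod 2 × ZMod 2,
        Mp ⁻¹' {k} ∩ Zp ⁻¹' {f k} ⊆ Mp ⁻¹' {k} ∩ Y₂ ⁻¹' {((f k).1, k.1 + k.2)} := by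
      intro k ω hω
      obtain ⟨hωM, hωZ⟩ := hω
      refine ⟨hωM, ?_⟩
      have hm1 : M₀ ω = k.1 ∧ M₁ ω = k.2 := by
        simpa [hMp, Prod.ext_iff] using hωM
      have hz1 : Z₀ ω = (f k).1 := by
        have : Zp ω = f k := hωZ
        rw [hZp] at this
        exact congrArg Prod.fst this
      simp only [hY₂, Set.mem_preimage, Set.mem_singleton_iff, Prod.ext_iff]
      exact ⟨hz1, by rw [hm1.1, hm1.2]⟩
    have hm : μ (Mp ⁻¹' {m} ∩ Y₂ ⁻¹' {((f m).1, m.1 + m.2)}) ≠ 0 :=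
      fun h0 => hf m (measure_mono_null (key m) h0)
    have hm' : μ (Mp ⁻¹' {m'} ∩ Y₂ ⁻¹' {((f m).1, m.1 + m.2)}) ≠ 0 := by
      rw [hc, hsum]
      exact fun h0 => hf m' (measure_mono_null (key m') h0)
    exact hne (D2 ((f m).1, m.1 + m.2) m m' hm hm')
  have claim3 : ∀ m m' : ZMod 2 × ZMod 2, m ≠ m' → m.1 + m.2 = m'.1 + m'.2 →
      (f m).2 ≠ (f m').2 := by
    intro m m' hne hsum hc
    have key : ∀ k : ZMod 2 × ZMod 2,
        Mp ⁻¹' {k} ∩ Zp ⁻¹' {f k} ⊆ Mp ⁻¹' {k} ∩ Y₃ ⁻¹' {((f k).2, k.1 + k.2)} := by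
      intro k ω hω
      obtain ⟨hωM, hωZ⟩ := hω
      refine ⟨hωM, ?_⟩
      have hm1 : M₀ ω = k.1 ∧ M₁ ω = k.2 := by
        simpa [hMp, Prod.ext_iff] using hωM
      have hz1 : Z₁ ω = (f k).2 := by
        have : Zp ω = f k := hωZ
        rw [hZp] at this
        exact congrArg Prod.snd this
      simp only [hY₃, Set.mem_preimage, Set.mem_singleton_iff, Prod.ext_iff]
      exact ⟨hz1, by rw [hm1.1, hm1.2]⟩
    have hm : μ (Mp ⁻¹' {m} ∩ Y₃ ⁻¹' {((f m).2, m.1 + m.2)}) ≠ 0 :=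
      fun h0 => hf m (measure_mono_null (key m) h0)
    have hm' : μ (Mp ⁻¹' {m'} ∩ Y₃ ⁻¹' {((f m).2, m.1 + m.2)}) ≠ 0 := by
      rw [hc, hsum]
      exact fun h0 => hf m' (measure_mono_null (key m') h0)
    exact hne (D3 ((f m).2, m.1 + m.2) m m' hm hm')
  have c1 := claim2 (0,0) (1,1) (by decide) (by decide)
  have c2 := claim2 (0,1) (1,0) (by decide) (by decide)
  have c3 := claim3 (0,0) (1,1) (by decide) (by decide)
  have c4 := claim3 (0,1) (1,0) (by decide) (by decide)
  obtain ⟨η₀, η₁, θ, hform⟩ := Stmt5Aux.comb f finj c1 c2 c3 c4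
  refine ⟨η₀, η₁, θ, ?_⟩
  rw [MeasureTheory.ae_iff]
  have hsub : {ω | ¬(Z₀ ω = (if θ = 0 then M₀ ω else M₁ ω) + η₀ ∧
      Z₁ ω = (if θ = 0 then M₁ ω else M₀ ω) + η₁)} ⊆
      ⋃ m : ZMod 2 × ZMod 2, ⋃ z : ZMod 2 × ZMod 2,
        if z = f m then (∅ : Set Ω) else Mp ⁻¹' {m} ∩ Zp ⁻¹' {z} := by
    intro ω hω
    by_cases hz : Zp ω = f (Mp ω)
    · exfalso
      apply hω
      rw [hform (Mp ω)] at hz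
      constructor
      · have := congrArg Prod.fst hz
        simpa [hZp, hMp] using this
      · have := congrArg Prod.snd hz
        simpa [hZp, hMp] using this
    · refine Set.mem_iUnion.2 ⟨Mp ω, Set.mem_iUnion.2 ⟨Zp ω, ?_⟩⟩
      rw [if_neg hz]
      exact ⟨rfl, rfl⟩
  refine measure_mono_null hsub ?_
  refine measure_iUnion_null fun m => measure_iUnion_null fun z => ?_
  by_cases hz : z = f m
  · simp [hz]
  · rw [if_neg hz]
    exact hvan m z hz
end

section
/- Let M₀, M₁ be i.i.d. uniform on {0,1} and G ∈ {0,1} with H(M₀, M₁ | G, M₀⊕M₁) = 0. Then G = M₀ ⊕ η a.s. or G = M₁ ⊕ η a.s. for some η ∈ {0,1}. -/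
open MeasureTheory ENNReal

lemma zmod2_cases (x : ZMod 2) : x = 0 ∨ x = 1 := by revert x; decide

lemma sum_zmod2 (f : ZMod 2 → ℝ) : ∑ x, f x = f 0 + f 1 := by
  have h : (Finset.univ : Finset (ZMod 2)) = {0, 1} := by decide
  rw [h, Finset.sum_insert (by decide), Finset.sum_singleton]

lemma key_le {r₁ r₂ q : ℝ} (h1 : 0 ≤ r₁) (h2 : 0 ≤ r₂)
    (hm1 : r₁ ≤ 4⁻¹) (hm2 : r₂ ≤ 4⁻¹)
    (hq1 : r₁ ≤ q) (hq2 : r₂ ≤ q) (hq3 : q ≤ r₁ + r₂) :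
    Real.negMulLog q ≤ Real.negMulLog r₁ + Real.negMulLog r₂ := by
  rcases eq_or_lt_of_le (h1.trans hq1) with hq0 | hq0
  · have hr1 : r₁ = 0 := le_antisymm (hq1.trans hq0.symm.le) h1
    have hr2 : r₂ = 0 := le_antisymm (hq2.trans hq0.symm.le) h2
    simp [← hq0, hr1, hr2, Real.negMulLog]
  · set m := max r₁ r₂ with hm
    have hmq : m ≤ q := max_le hq1 hq2
    have hm0 : 0 < m := by
      rcases le_total r₁ r₂ with h | h
      · rw [hm, max_eq_right h]; linarith
      · rw [hm, max_eq_left h]; linarith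
    have hm4 : m ≤ 4⁻¹ := max_le hm1 hm2
    have hlogm : Real.log m < 0 := Real.log_neg hm0 (by linarith)
    have hlogqm : Real.log m ≤ Real.log q := Real.log_le_log hm0 hmq
    have e1 : Real.negMulLog q ≤ q * (-Real.log m) := by
      rw [Real.negMulLog]; nlinarith
    have e2 : q * (-Real.log m) ≤ (r₁ + r₂) * (-Real.log m) := by nlinarith
    have e3 : r₁ * (-Real.log m) ≤ Real.negMulLog r₁ := by
      rcases eq_or_lt_of_le h1 with h | h
      · simp [← h, Real.negMulLog]
      · have hl : Real.log r₁ ≤ Real.log m := Real.log_le_log h (le_max_left _ _)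
        rw [Real.negMulLog]; nlinarith
    have e4 : r₂ * (-Real.log m) ≤ Real.negMulLog r₂ := by
      rcases eq_or_lt_of_le h2 with h | h
      · simp [← h, Real.negMulLog]
      · have hl : Real.log r₂ ≤ Real.log m := Real.log_le_log h (le_max_right _ _)
        rw [Real.negMulLog]; nlinarith
    linarith

lemma key_lt {r₁ r₂ q : ℝ} (h1 : 0 < r₁) (h2 : 0 < r₂)
    (hm1 : r₁ ≤ 4⁻¹) (hm2 : r₂ ≤ 4⁻¹)
    (hq1 : r₁ ≤ q) (hq2 : r₂ ≤ q) (hq3 : q ≤ r₁ + r₂) :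
    Real.negMulLog q < Real.negMulLog r₁ + Real.negMulLog r₂ := by
  have hq0 : 0 < q := lt_of_lt_of_le h1 hq1
  set m := max r₁ r₂ with hm
  have hmq : m ≤ q := max_le hq1 hq2
  have hm0 : 0 < m := lt_of_lt_of_le h1 (le_max_left _ _)
  have hm4 : m ≤ 4⁻¹ := max_le hm1 hm2
  have hlogm : Real.log m < 0 := Real.log_neg hm0 (by linarith)
  have e3 : r₁ * (-Real.log m) ≤ Real.negMulLog r₁ := by
    have hl : Real.log r₁ ≤ Real.log m := Real.log_le_log h1 (le_max_left _ _)
    rw [Real.negMulLog]; nlinarith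
  have e4 : r₂ * (-Real.log m) ≤ Real.negMulLog r₂ := by
    have hl : Real.log r₂ ≤ Real.log m := Real.log_le_log h2 (le_max_right _ _)
    rw [Real.negMulLog]; nlinarith
  rcases lt_or_eq_of_le hq3 with h | h
  · have hlogqm : Real.log m ≤ Real.log q := Real.log_le_log hm0 hmq
    have e1 : Real.negMulLog q ≤ q * (-Real.log m) := by
      rw [Real.negMulLog]; nlinarith
    have e2 : q * (-Real.log m) < (r₁ + r₂) * (-Real.log m) := by nlinarith
    linarith
  · have hmlt : m < q := by
      rcases le_total r₁ r₂ with hh | hh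
      · rw [hm, max_eq_right hh]; linarith
      · rw [hm, max_eq_left hh]; linarith
    have e1 : Real.negMulLog q < q * (-Real.log m) := by
      have := Real.log_lt_log hm0 hmlt
      rw [Real.negMulLog]; nlinarith
    have e2 : q * (-Real.log m) = (r₁ + r₂) * (-Real.log m) := by rw [h]
    linarith


/-- if `G ∈ {0,1}` and `H(M₀, M₁ | G, M₀ ⊕ M₁) = 0`, then `G`
is `M₀` or `M₁` up to complementation. -/
theorem stmt9 {Ω : Type*} [MeasurableSpace Ω] (μ : Measure Ω) [IsProbabilityMeasure μ]
    (M₀ M₁ G : Ω → ZMod 2)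
    (hM : ∀ a b : ZMod 2, μ {ω | M₀ ω = a ∧ M₁ ω = b} = (4 : ℝ≥0∞)⁻¹)
    (hG : condEnt μ (fun ω => (M₀ ω, M₁ ω)) (fun ω => (G ω, M₀ ω + M₁ ω)) = 0) :
    ∃ η : ZMod 2, (∀ᵐ ω ∂μ, G ω = M₀ ω + η) ∨ (∀ᵐ ω ∂μ, G ω = M₁ ω + η) := by
  classical
  set R : ZMod 2 → ZMod 2 → ZMod 2 → ℝ :=
    fun a b g => (μ {ω | M₀ ω = a ∧ M₁ ω = b ∧ G ω = g}).toReal with hRdef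
  set Q : ZMod 2 → ZMod 2 → ℝ :=
    fun g s => (μ {ω | G ω = g ∧ M₀ ω + M₁ ω = s}).toReal with hQdef
  have hRnn : ∀ a b g, 0 ≤ R a b g := fun _ _ _ => ENNReal.toReal_nonneg
  have hRle : ∀ a b g, R a b g ≤ 4⁻¹ := by
    intro a b g
    have h1 : μ {ω | M₀ ω = a ∧ M₁ ω = b ∧ G ω = g} ≤ μ {ω | M₀ ω = a ∧ M₁ ω = b} :=
      measure_mono (fun ω h => ⟨h.1, h.2.1⟩)
    rw [hM a b] at h1
    have := ENNReal.toReal_mono (by norm_num) h1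
    simpa using this
  have hsplit : ∀ a b : ZMod 2, (4 : ℝ)⁻¹ ≤ R a b 0 + R a b 1 := by
    intro a b
    have hsub : {ω | M₀ ω = a ∧ M₁ ω = b} ⊆
        {ω | M₀ ω = a ∧ M₁ ω = b ∧ G ω = 0} ∪ {ω | M₀ ω = a ∧ M₁ ω = b ∧ G ω = 1} := by
      intro ω h
      rcases zmod2_cases (G ω) with hg | hg
      · exact Or.inl ⟨h.1, h.2, hg⟩
      · exact Or.inr ⟨h.1, h.2, hg⟩
    have h1 := (measure_mono hsub).trans (measure_union_le (μ := μ) _ _)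
    rw [hM a b] at h1
    have h2 := ENNReal.toReal_mono
      (ENNReal.add_ne_top.mpr ⟨measure_ne_top _ _, measure_ne_top _ _⟩) h1
    rw [ENNReal.toReal_add (measure_ne_top _ _) (measure_ne_top _ _)] at h2
    simpa using h2
  have hQub : ∀ g s, Q g s ≤ R 0 s g + R 1 (s + 1) g := by
    intro g s
    have hsub : {ω | G ω = g ∧ M₀ ω + M₁ ω = s} ⊆
        {ω | M₀ ω = 0 ∧ M₁ ω = s ∧ G ω = g} ∪ {ω | M₀ ω = 1 ∧ M₁ ω = s + 1 ∧ G ω = g} := by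
      intro ω h
      rcases zmod2_cases (M₀ ω) with ha | ha
      · refine Or.inl ⟨ha, ?_, h.1⟩
        have := h.2; rw [ha, zero_add] at this; exact this
      · refine Or.inr ⟨ha, ?_, h.1⟩
        have h2 := h.2; rw [ha] at h2
        have : ∀ x y : ZMod 2, 1 + x = y → x = y + 1 := by decide
        exact this _ _ h2
    have h1 := (measure_mono hsub).trans (measure_union_le (μ := μ) _ _)
    have h2 := ENNReal.toReal_mono
      (ENNReal.add_ne_top.mpr ⟨measure_ne_top _ _, measure_ne_top _ _⟩) h1
    rw [ENNReal.toReal_add (measure_ne_top _ _) (measure_ne_top _ _)] at h2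
    exact h2
  have hQlb0 : ∀ g s, R 0 s g ≤ Q g s := by
    intro g s
    refine ENNReal.toReal_mono (measure_ne_top _ _) (measure_mono ?_)
    intro ω h
    exact ⟨h.2.2, by rw [h.1, h.2.1, zero_add]⟩
  have hQlb1 : ∀ g s, R 1 (s + 1) g ≤ Q g s := by
    intro g s
    refine ENNReal.toReal_mono (measure_ne_top _ _) (measure_mono ?_)
    intro ω h
    refine ⟨h.2.2, ?_⟩
    rw [h.1, h.2.1]
    have hd : ∀ t : ZMod 2, 1 + (t + 1) = t := by decide
    exact hd s
  have hent_Y : ent μ (fun ω => (G ω, M₀ ω + M₁ ω)) =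
      ∑ g : ZMod 2, ∑ s : ZMod 2, Real.negMulLog (Q g s) := by
    rw [ent, Fintype.sum_prod_type]
    refine Finset.sum_congr rfl fun g _ => Finset.sum_congr rfl fun s _ => ?_
    simp only [hQdef]
    congr 3
    ext ω
    simp [Prod.ext_iff]
  have hent_XY : ent μ (fun ω => ((M₀ ω, M₁ ω), (G ω, M₀ ω + M₁ ω))) =
      ∑ a : ZMod 2, ∑ b : ZMod 2, ∑ g : ZMod 2, Real.negMulLog (R a b g) := by
    rw [ent]
    simp only [Fintype.sum_prod_type]
    refine Finset.sum_congr rfl fun a _ => Finset.sum_congr rfl fun b _ =>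
      Finset.sum_congr rfl fun g _ => ?_
    rw [Finset.sum_eq_single (a + b)]
    · simp only [hRdef]
      congr 3
      ext ω
      simp only [Set.mem_preimage, Set.mem_singleton_iff, Prod.mk.injEq, Set.mem_setOf_eq]
      constructor
      · rintro ⟨⟨h1, h2⟩, h3, h4⟩; exact ⟨h1, h2, h3⟩
      · rintro ⟨h1, h2, h3⟩; exact ⟨⟨h1, h2⟩, h3, by rw [h1, h2]⟩
    · intro s _ hs
      have hempty : (fun ω => ((M₀ ω, M₁ ω), (G ω, M₀ ω + M₁ ω))) ⁻¹' {((a, b), (g, s))} = ∅ := by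
        ext ω
        simp only [Set.mem_preimage, Set.mem_singleton_iff, Prod.mk.injEq,
          Set.mem_empty_iff_false, iff_false, not_and]
        rintro ⟨h1, h2⟩ _ h4
        exact hs (by rw [← h4, h1, h2])
      rw [hempty]
      simp [Real.negMulLog]
    · intro h; exact absurd (Finset.mem_univ _) h
  rw [condEnt, hent_XY, hent_Y] at hG
  simp only [sum_zmod2] at hG
  have hbr : ∀ g s : ZMod 2, Real.negMulLog (Q g s) ≤
      Real.negMulLog (R 0 s g) + Real.negMulLog (R 1 (s + 1) g) :=
    fun g s => key_le (hRnn 0 s g) (hRnn 1 (s + 1) g) (hRle 0 s g) (hRle 1 (s + 1) g)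
      (hQlb0 g s) (hQlb1 g s) (hQub g s)
  have e00 : (0 + 0 : ZMod 2) = 0 := by decide
  have e01 : (0 + 1 : ZMod 2) = 1 := by decide
  have e10 : (1 + 0 : ZMod 2) = 1 := by decide
  have e11 : (1 + 1 : ZMod 2) = 0 := by decide
  have hzero : ∀ g s : ZMod 2, R 0 s g = 0 ∨ R 1 (s + 1) g = 0 := by
    intro g s
    by_contra hcon
    push_neg at hcon
    have hlt : Real.negMulLog (Q g s) <
        Real.negMulLog (R 0 s g) + Real.negMulLog (R 1 (s + 1) g) :=
      key_lt (lt_of_le_of_ne (hRnn _ _ _) (Ne.symm hcon.1))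
        (lt_of_le_of_ne (hRnn _ _ _) (Ne.symm hcon.2)) (hRle _ _ _) (hRle _ _ _)
        (hQlb0 g s) (hQlb1 g s) (hQub g s)
    have hb00 := hbr 0 0
    have hb01 := hbr 0 1
    have hb10 := hbr 1 0
    have hb11 := hbr 1 1
    rw [e01] at hb00 hb10
    rw [e11] at hb01 hb11
    rcases zmod2_cases g with rfl | rfl <;> rcases zmod2_cases s with rfl | rfl <;>
      simp only [e01, e11] at hlt <;> linarith
  have hEcell : ∀ s : ZMod 2, ∃ e : ZMod 2, R 0 s (e + 1) = 0 ∧ R 1 (s + 1) e = 0 := by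
    intro s
    rcases hzero 0 s with h | h
    · refine ⟨1, ?_, ?_⟩
      · rw [e11]; exact h
      · rcases hzero 1 s with h' | h'
        · exfalso; have := hsplit 0 s; linarith
        · exact h'
    · rcases hzero 1 s with h' | h'
      · exact ⟨0, by rw [e01]; exact h', h⟩
      · exfalso; have := hsplit 1 (s + 1); linarith
  choose η hη1 hη2 using hEcell
  have hRzero : ∀ a b g, R a b g = 0 → μ {ω | M₀ ω = a ∧ M₁ ω = b ∧ G ω = g} = 0 := by
    intro a b g h
    simp only [hRdef] at h
    rcases (ENNReal.toReal_eq_zero_iff _).mp h with h' | h'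
    · exact h'
    · exact absurd h' (measure_ne_top _ _)
  have hnull : ∀ a b : ZMod 2, μ {ω | M₀ ω = a ∧ M₁ ω = b ∧ G ω ≠ η (a + b) + a} = 0 := by
    intro a b
    have hne : ∀ x y : ZMod 2, x ≠ y → x = y + 1 := by decide
    have hne' : ∀ x y : ZMod 2, x ≠ y + 1 → x = y := by decide
    rcases zmod2_cases a with rfl | rfl
    · refine measure_mono_null ?_ (hRzero _ _ _ (hη1 b))
      rintro ω ⟨h1, h2, h3⟩
      refine ⟨h1, h2, ?_⟩
      simp only [zero_add, add_zero] at h3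
      exact hne _ _ h3
    · have h := hRzero _ _ _ (hη2 (b + 1))
      have hb : (b + 1 + 1 : ZMod 2) = b := by
        have : ∀ t : ZMod 2, t + 1 + 1 = t := by decide
        exact this b
      rw [hb] at h
      refine measure_mono_null ?_ h
      rintro ω ⟨h1, h2, h3⟩
      refine ⟨h1, h2, ?_⟩
      rw [add_comm 1 b] at h3
      exact hne' _ _ h3
  by_cases hc : η 1 = η 0
  · have hconst : ∀ s, η s = η 0 := by
      intro s
      rcases zmod2_cases s with rfl | rfl
      · rfl
      · exact hc
    refine ⟨η 0, Or.inl ?_⟩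
    rw [ae_iff]
    refine measure_mono_null (fun ω hω => ?_)
      (measure_iUnion_null fun a : ZMod 2 => measure_iUnion_null fun b : ZMod 2 => hnull a b)
    simp only [Set.mem_iUnion]
    refine ⟨M₀ ω, M₁ ω, rfl, rfl, ?_⟩
    rw [hconst (M₀ ω + M₁ ω), add_comm (η 0) (M₀ ω)]
    exact hω
  · have hc' : η 1 = η 0 + 1 := by
      have : ∀ x y : ZMod 2, x ≠ y → x = y + 1 := by decide
      exact this _ _ hc
    refine ⟨η 0, Or.inr ?_⟩
    rw [ae_iff]
    refine measure_mono_null (fun ω hω => ?_)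
      (measure_iUnion_null fun a : ZMod 2 => measure_iUnion_null fun b : ZMod 2 => hnull a b)
    simp only [Set.mem_iUnion]
    refine ⟨M₀ ω, M₁ ω, rfl, rfl, ?_⟩
    intro h
    apply hω
    have key : ∀ a b : ZMod 2, η (a + b) + a = b + η 0 := by
      intro a b
      rcases zmod2_cases a with rfl | rfl <;> rcases zmod2_cases b with rfl | rfl <;>
        simp only [e00, e01, e10, e11, hc'] <;>
        rcases zmod2_cases (η 0) with h0 | h0 <;> rw [h0] <;> decide
    show G ω = M₁ ω + η 0
    rw [h, key (M₀ ω) (M₁ ω), add_comm (M₁ ω) (η 0)]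
end

section
/- Let X₁ be uniform on [0..k−1], U uniform on {0,1}, with X₁ and U independent, and let X₂ be a random variable with |support(X₂)| ≤ k such that H(U | X₁, X₂) = H(X₂ | X₁, U) = H(X₁ | X₂, U) = 0. Then U is independent of X₂, and X₂ is uniform on a set of size exactly k. -/
/-!
Put c = 1/(2k). Each atom of (X₁, X₂, U) lies in an atom of (X₁, U), so has mass at most c,
while H(X₁, X₂, U) = H(X₁, U) = log (1/c). Since -t log t ≥ t log (1/c) for 0 ≤ t ≤ c, with
equality only at t ∈ {0, c}, all these atoms have mass 0 or c. The atoms of (X₂, U) are unions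
of them, hence of mass 0 or at least c, and H(X₂, U) = H(X₁, X₂, U) = log (1/c) forces them into
{0, c} by the reverse inequality. Now (X₂, U) has atoms of mass at most c carried by
supp X₂ × {0, 1}, a set of at most 2k = 1/c points: it is uniform on that product, which gives
|supp X₂| = k, the uniform marginals and the independence.

The random variables are not assumed measurable, so μ is used only through monotonicity and
subadditivity: total masses are bounded below by 1 rather than computed.
-/

open MeasureTheory ENNReal

open Finset Real

section NegMulLog

lemma mul_neg_log_le_negMulLog_s13 {c t : ℝ} (ht : 0 ≤ t) (htc : t ≤ c) :
    t * -log c ≤ negMulLog t := by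
  rcases ht.eq_or_lt with rfl | ht
  · simp
  · rw [negMulLog, neg_mul, mul_neg]
    exact neg_le_neg (mul_le_mul_of_nonneg_left (log_le_log ht htc) ht.le)

lemma negMulLog_le_mul_neg_log {c t : ℝ} (hc : 0 < c) (ht : t = 0 ∨ c ≤ t) :
    negMulLog t ≤ t * -log c := by
  rcases ht with rfl | hct
  · simp
  · rw [negMulLog, neg_mul, mul_neg]
    exact neg_le_neg (mul_le_mul_of_nonneg_left (log_le_log hc hct) (hc.le.trans hct))

lemma eq_zero_or_eq_of_negMulLog_eq {c t : ℝ} (hc : 0 < c) (ht : 0 ≤ t)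
    (h : negMulLog t = t * -log c) : t = 0 ∨ t = c := by
  refine ht.eq_or_lt.imp Eq.symm fun ht => ?_
  rw [negMulLog, neg_mul, mul_neg, neg_inj] at h
  exact log_injOn_pos ht hc (mul_left_cancel₀ ht.ne' h)

variable {ι : Type*} [Fintype ι] {f : ι → ℝ} {c : ℝ}

theorem sum_eq_one_and_eq_zero_or_eq_of_le (hc0 : 0 < c) (hc1 : c < 1) (hf0 : ∀ i, 0 ≤ f i)
    (hfc : ∀ i, f i ≤ c) (hsum : 1 ≤ ∑ i, f i) (hent : ∑ i, negMulLog (f i) = -log c) :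
    ∑ i, f i = 1 ∧ ∀ i, f i = 0 ∨ f i = c := by
  have hL : 0 < -log c := neg_pos.2 (log_neg hc0 hc1)
  have hle : ∀ i ∈ univ, f i * -log c ≤ negMulLog (f i) :=
    fun i _ => mul_neg_log_le_negMulLog_s13 (hf0 i) (hfc i)
  have hsum_le : (∑ i, f i) * -log c ≤ -log c := by
    simpa only [sum_mul, hent] using sum_le_sum hle
  have hsum1 : ∑ i, f i = 1 := le_antisymm ((mul_le_iff_le_one_left hL).1 hsum_le) hsum
  refine ⟨hsum1, fun i => eq_zero_or_eq_of_negMulLog_eq hc0 (hf0 i) ?_⟩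
  refine ((sum_eq_sum_iff_of_le hle).1 ?_ i (mem_univ i)).symm
  rw [← sum_mul, hsum1, one_mul, hent]

theorem sum_eq_one_and_eq_zero_or_eq_of_ge (hc0 : 0 < c) (hc1 : c < 1)
    (hf : ∀ i, f i = 0 ∨ c ≤ f i) (hsum : ∑ i, f i ≤ 1) (hent : ∑ i, negMulLog (f i) = -log c) :
    ∑ i, f i = 1 ∧ ∀ i, f i = 0 ∨ f i = c := by
  have hL : 0 < -log c := neg_pos.2 (log_neg hc0 hc1)
  have hle : ∀ i ∈ univ, negMulLog (f i) ≤ f i * -log c :=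
    fun i _ => negMulLog_le_mul_neg_log hc0 (hf i)
  have hsum_ge : -log c ≤ (∑ i, f i) * -log c := by
    simpa only [sum_mul, hent] using sum_le_sum hle
  have hsum1 : ∑ i, f i = 1 := le_antisymm hsum ((le_mul_iff_one_le_left hL).1 hsum_ge)
  have hf0 : ∀ i, 0 ≤ f i := fun i => (hf i).elim ge_of_eq hc0.le.trans
  refine ⟨hsum1, fun i => eq_zero_or_eq_of_negMulLog_eq hc0 (hf0 i) ?_⟩
  refine (sum_eq_sum_iff_of_le hle).1 ?_ i (mem_univ i)
  rw [← sum_mul, hsum1, one_mul, hent]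

end NegMulLog

lemma Set.preimage_prodMk_singleton {Ω α β : Type*} (X : Ω → α) (Y : Ω → β) (a : α) (b : β) :
    (fun ω => (X ω, Y ω)) ⁻¹' {(a, b)} = X ⁻¹' {a} ∩ Y ⁻¹' {b} := by
  rw [← Set.singleton_prod_singleton, Set.mk_preimage_prod]

namespace MeasureTheory

variable {Ω α β γ : Type*} [MeasurableSpace Ω] {μ : Measure Ω}

lemma ent_comp_equiv [Fintype α] [Fintype β] (X : Ω → α) (e : α ≃ β) :
    ent μ (e ∘ X) = ent μ X := by
  unfold ent
  rw [← e.sum_comp]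
  congr! with a
  ext ω
  simp

lemma ent_prod_left_comm [Fintype α] [Fintype β] [Fintype γ] (X : Ω → α) (Y : Ω → β)
    (Z : Ω → γ) : ent μ (fun ω => (X ω, (Y ω, Z ω))) = ent μ (fun ω => (Y ω, (X ω, Z ω))) :=
  ent_comp_equiv (μ := μ) (fun ω => (Y ω, (X ω, Z ω)))
    ⟨fun a => (a.2.1, (a.1, a.2.2)), fun a => (a.2.1, (a.1, a.2.2)), fun _ => rfl, fun _ => rfl⟩

lemma ent_eq_neg_log_of_uniform [Fintype α] {X : Ω → α} {c : ℝ}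
    (hX : ∀ a, μ.real (X ⁻¹' {a}) = c) (hcard : Fintype.card α * c = 1) :
    ent μ X = -log c := by
  simp only [ent, ← measureReal_def, hX, sum_const, card_univ, nsmul_eq_mul, negMulLog]
  rw [← mul_assoc, mul_neg, hcard, neg_one_mul]

section Subadditivity

variable [IsFiniteMeasure μ]

lemma measureReal_preimage_le_comp (T : Ω → α) (g : α → γ) (a : α) :
    μ.real (T ⁻¹' {a}) ≤ μ.real ((g ∘ T) ⁻¹' {g a}) :=
  measureReal_mono fun ω (h : T ω = a) => congrArg g h

lemma measureReal_preimage_comp_le_sum [Fintype α] [DecidableEq γ] (T : Ω → α) (g : α → γ)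
    (b : γ) : μ.real ((g ∘ T) ⁻¹' {b}) ≤ ∑ a with g a = b, μ.real (T ⁻¹' {a}) := by
  refine (measureReal_mono ?_ (measure_ne_top _ _)).trans (measureReal_biUnion_finset_le _ _)
  intro ω (h : g (T ω) = b)
  exact Set.mem_biUnion (mem_filter.2 ⟨mem_univ (T ω), h⟩) rfl

lemma measureReal_le_sum_inter_preimage [Fintype β] (s : Set Ω) (Y : Ω → β) :
    μ.real s ≤ ∑ b, μ.real (s ∩ Y ⁻¹' {b}) :=
  (measureReal_mono (s₂ := ⋃ b, s ∩ Y ⁻¹' {b}) fun ω hω => Set.mem_iUnion.2 ⟨Y ω, hω, rfl⟩).trans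
    (measureReal_iUnion_fintype_le _)

lemma measureReal_preimage_comp_eq_zero_or_eq [Fintype α] [Fintype γ] (T : Ω → α) (g : α → γ)
    {c : ℝ} (hc0 : 0 < c) (hc1 : c < 1)
    (hT : ∀ a, μ.real (T ⁻¹' {a}) = 0 ∨ μ.real (T ⁻¹' {a}) = c)
    (hsum : ∑ a, μ.real (T ⁻¹' {a}) ≤ 1) (hent : ent μ (g ∘ T) = -log c) (b : γ) :
    μ.real ((g ∘ T) ⁻¹' {b}) = 0 ∨ μ.real ((g ∘ T) ⁻¹' {b}) = c := by
  classical
  have hfiber : ∀ b, μ.real ((g ∘ T) ⁻¹' {b}) = 0 ∨ c ≤ μ.real ((g ∘ T) ⁻¹' {b}) := by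
    intro b
    by_cases h : ∃ a, g a = b ∧ μ.real (T ⁻¹' {a}) = c
    · obtain ⟨a, rfl, ha⟩ := h
      exact Or.inr (ha ▸ measureReal_preimage_le_comp T g a)
    · push Not at h
      refine Or.inl (le_antisymm ?_ measureReal_nonneg)
      refine (measureReal_preimage_comp_le_sum T g b).trans_eq (sum_eq_zero fun a ha => ?_)
      exact (hT a).resolve_right (h a (mem_filter.1 ha).2)
  have hsum' : ∑ b, μ.real ((g ∘ T) ⁻¹' {b}) ≤ 1 :=
    (sum_le_sum fun b _ => measureReal_preimage_comp_le_sum T g b).trans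
      ((sum_fiberwise univ g _).trans_le hsum)
  exact (sum_eq_one_and_eq_zero_or_eq_of_ge hc0 hc1 hfiber hsum' hent).2 b

end Subadditivity

section Probability

variable [IsProbabilityMeasure μ] [Fintype α]

lemma one_le_sum_measureReal_preimage (X : Ω → α) : 1 ≤ ∑ a, μ.real (X ⁻¹' {a}) := by
  simpa using measureReal_le_sum_inter_preimage (μ := μ) Set.univ X

lemma one_le_sum_measureReal_preimage_of_support {X : Ω → α} {S : Finset α}
    (hS : ∀ a ∉ S, μ.real (X ⁻¹' {a}) = 0) : 1 ≤ ∑ a ∈ S, μ.real (X ⁻¹' {a}) :=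
  (one_le_sum_measureReal_preimage X).trans_eq
    (sum_subset (subset_univ S) fun a _ ha => hS a ha).symm

lemma measureReal_preimage_eq_of_forall_le {X : Ω → α} {S : Finset α} {b : α → ℝ}
    (hS : ∀ a ∉ S, μ.real (X ⁻¹' {a}) = 0) (hle : ∀ a ∈ S, μ.real (X ⁻¹' {a}) ≤ b a)
    (hb : ∑ a ∈ S, b a ≤ 1) {a : α} (ha : a ∈ S) : μ.real (X ⁻¹' {a}) = b a :=
  (sum_eq_sum_iff_of_le hle).1
    (le_antisymm (sum_le_sum hle) (hb.trans (one_le_sum_measureReal_preimage_of_support hS)))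
    a ha

theorem measureReal_preimage_prodMk_eq_zero_or_eq [Fintype β] [Fintype γ] {X : Ω → α}
    {Y : Ω → β} {Z : Ω → γ} {c : ℝ} (hc1 : c < 1)
    (hXZ : ∀ v, μ.real ((fun ω => (X ω, Z ω)) ⁻¹' {v}) = c)
    (hcard : Fintype.card (α × γ) * c = 1) (hY : condEnt μ Y (fun ω => (X ω, Z ω)) = 0)
    (hX : condEnt μ X (fun ω => (Y ω, Z ω)) = 0) (p : β × γ) :
    μ.real ((fun ω => (Y ω, Z ω)) ⁻¹' {p}) = 0 ∨ μ.real ((fun ω => (Y ω, Z ω)) ⁻¹' {p}) = c := by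
  have hc0 : 0 < c := pos_of_mul_pos_right (hcard ▸ one_pos) (Nat.cast_nonneg _)
  set T := fun ω => (X ω, (Y ω, Z ω))
  have hentT : ent μ T = -log c := by
    rw [ent_prod_left_comm, sub_eq_zero.1 hY]
    exact ent_eq_neg_log_of_uniform hXZ hcard
  obtain ⟨hTsum, hTval⟩ := sum_eq_one_and_eq_zero_or_eq_of_le hc0 hc1
    (fun _ => measureReal_nonneg)
    (fun a => (measureReal_preimage_le_comp T (fun a => (a.1, a.2.2)) a).trans_eq (hXZ _))
    (one_le_sum_measureReal_preimage T) hentT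
  exact measureReal_preimage_comp_eq_zero_or_eq T Prod.snd hc0 hc1 hTval hTsum.le
    ((sub_eq_zero.1 hX).symm.trans hentT) p

section UniformProduct

variable [Fintype β] {W : Ω → α} {V : Ω → β} {S : Finset α} {n : ℕ} {c : ℝ}
  (hW : ∀ a ∉ S, μ.real (W ⁻¹' {a}) = 0) (hWV : ∀ a b, μ.real (W ⁻¹' {a} ∩ V ⁻¹' {b}) ≤ c)
  (hSn : #S ≤ n) (hn : (n * Fintype.card β : ℝ) * c = 1)

omit [IsProbabilityMeasure μ] [Fintype α] in
include hSn hn in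
lemma card_mul_card_mul_le_one : (#S * Fintype.card β : ℝ) * c ≤ 1 := by
  have hc : 0 < c := pos_of_mul_pos_right (hn ▸ one_pos) (by positivity)
  exact hn ▸ by gcongr

include hW

omit [Fintype α] [Fintype β] in
lemma measureReal_inter_preimage_of_notMem {a : α} (ha : a ∉ S) (b : β) :
    μ.real (W ⁻¹' {a} ∩ V ⁻¹' {b}) = 0 :=
  le_antisymm ((measureReal_mono Set.inter_subset_left).trans_eq (hW a ha)) measureReal_nonneg

omit [Fintype α] in
lemma measureReal_preimage_prodMk_of_notMem (p : α × β) (hp : p ∉ S ×ˢ univ) :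
    μ.real ((fun ω => (W ω, V ω)) ⁻¹' {p}) = 0 := by
  rw [Set.preimage_prodMk_singleton]
  exact measureReal_inter_preimage_of_notMem hW (fun ha => hp (mk_mem_product ha (mem_univ _))) _

include hWV hSn hn

lemma measureReal_inter_preimage_eq_of_mem {a : α} (ha : a ∈ S) (b : β) :
    μ.real (W ⁻¹' {a} ∩ V ⁻¹' {b}) = c := by
  rw [← Set.preimage_prodMk_singleton]
  refine measureReal_preimage_eq_of_forall_le (b := fun _ => c)
    (measureReal_preimage_prodMk_of_notMem hW) (fun ⟨a, b⟩ _ => ?_)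
    (by simpa [mul_assoc] using card_mul_card_mul_le_one hSn hn)
    (mk_mem_product ha (mem_univ b))
  rw [Set.preimage_prodMk_singleton]
  exact hWV a b

lemma card_eq_of_measureReal_le : #S = n := by
  have hS : 1 ≤ (#S * Fintype.card β : ℝ) * c :=
    calc 1 ≤ ∑ p ∈ S ×ˢ univ, μ.real ((fun ω => (W ω, V ω)) ⁻¹' {p}) :=
          one_le_sum_measureReal_preimage_of_support (measureReal_preimage_prodMk_of_notMem hW)
      _ = ∑ p ∈ S ×ˢ (univ : Finset β), c := sum_congr rfl fun ⟨a, b⟩ hab => by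
          rw [Set.preimage_prodMk_singleton]
          exact measureReal_inter_preimage_eq_of_mem hW hWV hSn hn (mem_product.1 hab).1 b
      _ = (#S * Fintype.card β : ℝ) * c := by simp [mul_assoc]
  have hne : (Fintype.card β : ℝ) * c ≠ 0 := right_ne_zero_of_mul (by rw [← mul_assoc, hn]; simp)
  have heq : (#S : ℝ) * (Fintype.card β * c) = n * (Fintype.card β * c) := by
    rw [← mul_assoc, ← mul_assoc, hn]
    exact (card_mul_card_mul_le_one hSn hn).antisymm hS
  exact_mod_cast mul_right_cancel₀ hne heq

lemma measureReal_preimage_eq_inv_of_mem {a : α} (ha : a ∈ S) :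
    μ.real (W ⁻¹' {a}) = (n : ℝ)⁻¹ := by
  rw [← eq_inv_of_mul_eq_one_right ((mul_assoc ..).symm.trans hn)]
  refine measureReal_preimage_eq_of_forall_le (b := fun _ => Fintype.card β * c) hW
    (fun a ha => ?_) ?_ ha
  · refine (measureReal_le_sum_inter_preimage _ V).trans_eq ?_
    simp [measureReal_inter_preimage_eq_of_mem hW hWV hSn hn ha]
  · simpa [mul_assoc] using card_mul_card_mul_le_one hSn hn

lemma measureReal_preimage_right_eq_inv (b : β) :
    μ.real (V ⁻¹' {b}) = (Fintype.card β : ℝ)⁻¹ := by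
  have hSc : (#S : ℝ) * c * Fintype.card β = 1 := by
    rw [card_eq_of_measureReal_le hW hWV hSn hn, ← hn]
    ring
  rw [← eq_inv_of_mul_eq_one_left hSc]
  refine measureReal_preimage_eq_of_forall_le (μ := μ) (X := V) (S := univ)
    (b := fun _ => #S * c) (by simp) (fun b _ => ?_) ?_ (mem_univ b)
  · refine (measureReal_le_sum_inter_preimage _ W).trans_eq ?_
    rw [← sum_subset (subset_univ S) fun a _ ha => ?_]
    · simp_rw [Set.inter_comm, sum_congr rfl fun a ha =>
        measureReal_inter_preimage_eq_of_mem hW hWV hSn hn ha b, sum_const, nsmul_eq_mul]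
    · rw [Set.inter_comm]
      exact measureReal_inter_preimage_of_notMem hW ha b
  · simpa [mul_comm, mul_assoc, mul_left_comm] using card_mul_card_mul_le_one hSn hn

lemma measure_inter_preimage_eq_mul (a : α) (b : β) :
    μ (V ⁻¹' {b} ∩ W ⁻¹' {a}) = μ (V ⁻¹' {b}) * μ (W ⁻¹' {a}) := by
  rw [← ofReal_measureReal, ← ofReal_measureReal, ← ofReal_measureReal,
    ← ENNReal.ofReal_mul measureReal_nonneg, Set.inter_comm]
  congr 1
  by_cases ha : a ∈ S
  · rw [measureReal_inter_preimage_eq_of_mem hW hWV hSn hn ha,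
      measureReal_preimage_right_eq_inv hW hWV hSn hn,
      measureReal_preimage_eq_inv_of_mem hW hWV hSn hn ha, eq_inv_of_mul_eq_one_right hn,
      mul_inv_rev]
  · rw [measureReal_inter_preimage_of_notMem hW ha, hW a ha, mul_zero]

end UniformProduct

end Probability

end MeasureTheory

theorem stmt13_general {Ω β : Type*} [MeasurableSpace Ω] (μ : Measure Ω) [IsProbabilityMeasure μ]
    [Fintype β] (k : ℕ) (X₁ : Ω → Fin k) (U : Ω → ZMod 2) (X₂ : Ω → β)
    (hX₁U : ∀ (x : Fin k) (u : ZMod 2),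
      μ {ω | X₁ ω = x ∧ U ω = u} = ((2 * k : ℕ) : ℝ≥0∞)⁻¹)
    (hsupp : Set.ncard {z : β | μ (X₂ ⁻¹' {z}) ≠ 0} ≤ k)
    (h2 : condEnt μ X₂ (fun ω => (X₁ ω, U ω)) = 0)
    (h3 : condEnt μ X₁ (fun ω => (X₂ ω, U ω)) = 0) :
    (∀ (u : ZMod 2) (z : β),
      μ {ω | U ω = u ∧ X₂ ω = z} = μ (U ⁻¹' {u}) * μ (X₂ ⁻¹' {z})) ∧
    Set.ncard {z : β | μ (X₂ ⁻¹' {z}) ≠ 0} = k ∧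
    (∀ z : β, μ (X₂ ⁻¹' {z}) ≠ 0 → μ (X₂ ⁻¹' {z}) = ((k : ℕ) : ℝ≥0∞)⁻¹) := by
  classical
  have hk : 0 < k := Fin.pos (X₁ (nonempty_of_isProbabilityMeasure μ).some)
  set c : ℝ := ((2 * k : ℕ) : ℝ)⁻¹
  have hkc : (k * Fintype.card (ZMod 2) : ℝ) * c = 1 := by
    simp [c]
    field_simp
  have hX₁U' : ∀ v : Fin k × ZMod 2, μ.real ((fun ω => (X₁ ω, U ω)) ⁻¹' {v}) = c := by
    rintro ⟨x, u⟩
    rw [Set.preimage_prodMk_singleton, measureReal_def]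
    change (μ {ω | X₁ ω = x ∧ U ω = u}).toReal = c
    simp [hX₁U, c]
  have hX₂U (z : β) (u : ZMod 2) : μ.real (X₂ ⁻¹' {z} ∩ U ⁻¹' {u}) ≤ c := by
    have hc1 : c < 1 := inv_lt_one_of_one_lt₀ (by norm_cast; omega)
    have hcard : (Fintype.card (Fin k × ZMod 2) : ℝ) * c = 1 := by
      rw [Fintype.card_prod, Fintype.card_fin, Nat.cast_mul]
      exact hkc
    rw [← Set.preimage_prodMk_singleton]
    rcases measureReal_preimage_prodMk_eq_zero_or_eq hc1 hX₁U' hcard h2 h3 (z, u) with h | h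
    · exact h.trans_le (by positivity)
    · exact h.le
  set S : Finset β := {z | μ (X₂ ⁻¹' {z}) ≠ 0}.toFinset
  have hS (z : β) (hz : z ∉ S) : μ.real (X₂ ⁻¹' {z}) = 0 := by
    simp_all [S, measureReal_def]
  have hSk : #S ≤ k := by
    rwa [Set.ncard_eq_toFinset_card'] at hsupp
  refine ⟨fun u z => measure_inter_preimage_eq_mul hS hX₂U hSk hkc z u,
    (Set.ncard_eq_toFinset_card' _).trans (card_eq_of_measureReal_le hS hX₂U hSk hkc),
    fun z hz => ?_⟩
  rw [← ofReal_measureReal,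
    measureReal_preimage_eq_inv_of_mem hS hX₂U hSk hkc (by simpa [S] using hz),
    ENNReal.ofReal_inv_of_pos (by positivity), ofReal_natCast]

/-- the independence step of the cycles checker. -/
theorem stmt13 {Ω β : Type*} [MeasurableSpace Ω] (μ : Measure Ω) [IsProbabilityMeasure μ]
    [Fintype β] (k : ℕ) (hk : 0 < k) (X₁ : Ω → Fin k) (U : Ω → ZMod 2) (X₂ : Ω → β)
    (hX₁U : ∀ (x : Fin k) (u : ZMod 2),
      μ {ω | X₁ ω = x ∧ U ω = u} = ((2 * k : ℕ) : ℝ≥0∞)⁻¹)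
    (hsupp : Set.ncard {z : β | μ (X₂ ⁻¹' {z}) ≠ 0} ≤ k)
    (h1 : condEnt μ U (fun ω => (X₁ ω, X₂ ω)) = 0)
    (h2 : condEnt μ X₂ (fun ω => (X₁ ω, U ω)) = 0)
    (h3 : condEnt μ X₁ (fun ω => (X₂ ω, U ω)) = 0) :
    (∀ (u : ZMod 2) (z : β),
      μ {ω | U ω = u ∧ X₂ ω = z} = μ (U ⁻¹' {u}) * μ (X₂ ⁻¹' {z})) ∧
    Set.ncard {z : β | μ (X₂ ⁻¹' {z}) ≠ 0} = k ∧
    (∀ z : β, μ (X₂ ⁻¹' {z}) ≠ 0 → μ (X₂ ⁻¹' {z}) = ((k : ℕ) : ℝ≥0∞)⁻¹) :=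
  stmt13_general μ k X₁ U X₂ hX₁U hsupp h2 h3
end

section
/- Let M₀, M₁ be i.i.d. uniform on {0,1}, and let n switches with states θ₁,…,θₙ ∈ {0,1} and offsets η_{i,j} ∈ {0,1} produce outputs Z_{i,0} = M_{θᵢ} ⊕ η_{i,0}, Z_{i,1} = M_{1−θᵢ} ⊕ η_{i,1}. Fix a₁,…,aₙ ∈ {0,1}. Then H(M₁ | Z_{1,a₁},…,Z_{n,aₙ}) = 0 if and only if (θ₁,…,θₙ) ≠ (a₁,…,aₙ). -/
open MeasureTheory ENNReal

section Entropy

variable {Ω α β : Type*} [MeasurableSpace Ω] [Fintype α] [Fintype β] (μ : Measure Ω)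

lemma ent_comp_of_injective (X : Ω → α) {f : α → β} (hf : Function.Injective f) :
    ent μ (fun ω => f (X ω)) = ent μ X := by
  refine (Fintype.sum_of_injective f hf _ _ (fun b hb => ?_) (fun a => ?_)).symm
  · have : (fun ω => f (X ω)) ⁻¹' {b} = ∅ :=
      Set.eq_empty_of_forall_notMem fun ω h => hb ⟨X ω, h⟩
    simp [this]
  · have : (fun ω => f (X ω)) ⁻¹' {f a} = X ⁻¹' {a} := by
      ext ω; simp [hf.eq_iff]
    rw [this]

lemma ent_const [IsProbabilityMeasure μ] (b : α) : ent μ (fun _ : Ω => b) = 0 := by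
  classical
  refine (Finset.sum_eq_single b (fun a _ hab => ?_) (by simp)).trans ?_
  · have : (fun _ : Ω => b) ⁻¹' {a} = ∅ :=
      Set.eq_empty_of_forall_notMem fun _ h => hab (Set.mem_singleton_iff.1 h).symm
    simp [this]
  · simp [Set.preimage_const_of_mem (Set.mem_singleton b)]

lemma ent_eq_log_card_of_uniform (X : Ω → α)
    (hX : ∀ a, μ (X ⁻¹' {a}) = (Fintype.card α : ℝ≥0∞)⁻¹) :
    ent μ X = Real.log (Fintype.card α) := by
  simp only [ent, hX, toReal_inv, toReal_natCast, Finset.sum_const, Finset.card_univ,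
    nsmul_eq_mul, Real.negMulLog, Real.log_inv]
  rcases eq_or_ne (Fintype.card α : ℝ) 0 with h | h
  · simp [h]
  · field_simp

lemma condEnt_eq_zero_of_eq_comp (X : Ω → α) (Y : Ω → β) (g : β → α)
    (hXY : ∀ ω, X ω = g (Y ω)) : condEnt μ X Y = 0 := by
  have hinj : Function.Injective fun y : β => (g y, y) := fun _ _ h => congrArg Prod.snd h
  simp only [condEnt, hXY, ent_comp_of_injective μ Y hinj, sub_self]

lemma condEnt_comp_of_injective {γ : Type*} [Fintype γ] (X : Ω → α) (W : Ω → γ)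
    {φ : γ → β} (hφ : Function.Injective φ) :
    condEnt μ X (fun ω => φ (W ω)) = condEnt μ X W := by
  have hinj : Function.Injective fun p : α × γ => (p.1, φ p.2) :=
    fun p q h => Prod.ext (congrArg Prod.fst h :) (hφ (congrArg Prod.snd h :))
  simp only [condEnt, ent_comp_of_injective μ (fun ω => (X ω, W ω)) hinj,
    ent_comp_of_injective μ W hφ]

lemma ent_of_subsingleton [Subsingleton β] [IsProbabilityMeasure μ] (Y : Ω → β) :
    ent μ Y = 0 := by
  rcases isEmpty_or_nonempty β with _ | ⟨⟨b⟩⟩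
  · simp [ent]
  · rw [show Y = fun _ => b from funext fun _ => Subsingleton.elim _ _, ent_const]

lemma condEnt_of_subsingleton [Subsingleton β] [IsProbabilityMeasure μ] (X : Ω → α)
    (Y : Ω → β) :
    condEnt μ X Y = ent μ X := by
  have hinj : Function.Injective (Prod.fst : α × β → α) :=
    fun p q h => Prod.ext h (Subsingleton.elim _ _)
  rw [condEnt, ← ent_comp_of_injective μ (fun ω => (X ω, Y ω)) hinj, ent_of_subsingleton μ Y,
    sub_zero]

end Entropy

/-- Outer-measure version of additivity: the sets `X ⁻¹' {a}` need not be measurable, but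
subadditivity on `s` and on `sᶜ`, together with total mass `1`, pins down `μ (X ⁻¹' s)`. -/
lemma measure_preimage_finset_eq_sum {Ω α : Type*} [MeasurableSpace Ω] [Fintype α]
    (μ : Measure Ω) [IsProbabilityMeasure μ] (X : Ω → α) (c : α → ℝ≥0∞)
    (hX : ∀ a, μ (X ⁻¹' {a}) = c a) (hc : ∑ a, c a = 1) (s : Finset α) :
    μ (X ⁻¹' s) = ∑ a ∈ s, c a := by
  classical
  have hle : ∀ t : Finset α, μ (X ⁻¹' t) ≤ ∑ a ∈ t, c a := fun t =>
    calc μ (X ⁻¹' t) = μ (⋃ a ∈ t, X ⁻¹' {a}) := by simp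
      _ ≤ ∑ a ∈ t, μ (X ⁻¹' {a}) := measure_biUnion_finset_le _ _
      _ = ∑ a ∈ t, c a := by simp only [hX]
  have hcompl_ne_top : ∑ a ∈ sᶜ, c a ≠ ∞ :=
    ne_top_of_le_ne_top one_ne_top (hc ▸ Finset.sum_le_univ_sum_of_nonneg (by simp))
  refine le_antisymm (hle s) (ENNReal.le_of_add_le_add_right hcompl_ne_top ?_)
  calc ∑ a ∈ s, c a + ∑ a ∈ sᶜ, c a = μ Set.univ := by
        rw [Finset.sum_add_sum_compl, hc, measure_univ]
    _ ≤ μ (X ⁻¹' s) + μ (X ⁻¹' ↑sᶜ) :=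
        (measure_mono (by simp)).trans (measure_union_le _ _)
    _ ≤ μ (X ⁻¹' s) + ∑ a ∈ sᶜ, c a := add_le_add_right (hle sᶜ) _

section UniformBits

variable {Ω : Type*} [MeasurableSpace Ω] (μ : Measure Ω) {M₀ M₁ : Ω → ZMod 2}

lemma measure_preimage_fst_of_uniform_pair [IsProbabilityMeasure μ]
    (hM : ∀ a b : ZMod 2, μ {ω | M₀ ω = a ∧ M₁ ω = b} = (4 : ℝ≥0∞)⁻¹) (m : ZMod 2) :
    μ (M₀ ⁻¹' {m}) = (Fintype.card (ZMod 2) : ℝ≥0∞)⁻¹ := by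
  have hpair : ∀ p : ZMod 2 × ZMod 2, μ ((fun ω => (M₀ ω, M₁ ω)) ⁻¹' {p}) = 4⁻¹ := fun p => by
    simpa [Set.preimage, Prod.ext_iff] using hM p.1 p.2
  have hsum : ∑ _ : ZMod 2 × ZMod 2, (4 : ℝ≥0∞)⁻¹ = 1 := by
    simpa using ENNReal.mul_inv_cancel (a := 4) (by norm_num) (by norm_num)
  have hfst := measure_preimage_finset_eq_sum μ _ _ hpair hsum ({m} ×ˢ Finset.univ)
  have hset :
      (fun ω => (M₀ ω, M₁ ω)) ⁻¹' ↑({m} ×ˢ (Finset.univ : Finset (ZMod 2))) = M₀ ⁻¹' {m} := by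
    ext ω; simp [eq_comm]
  rw [← hset, hfst]
  simp only [Finset.sum_const, Finset.card_product, Finset.card_singleton, Finset.card_univ,
    ZMod.card, one_mul, nsmul_eq_mul, Nat.cast_ofNat]
  rw [show (4 : ℝ≥0∞) = 2 * 2 by norm_num, ENNReal.mul_inv (by simp) (by simp), ← mul_assoc,
    ENNReal.mul_inv_cancel (by simp) (by simp), one_mul]

lemma ent_pair_of_uniform_pair
    (hM : ∀ a b : ZMod 2, μ {ω | M₀ ω = a ∧ M₁ ω = b} = (4 : ℝ≥0∞)⁻¹) :
    ent μ (fun ω => (M₁ ω, M₀ ω)) = Real.log 4 := by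
  rw [ent_eq_log_card_of_uniform]
  · simp
  · intro p
    simpa [Set.preimage, Prod.ext_iff, and_comm] using hM p.2 p.1

lemma condEnt_of_uniform_pair [IsProbabilityMeasure μ]
    (hM : ∀ a b : ZMod 2, μ {ω | M₀ ω = a ∧ M₁ ω = b} = (4 : ℝ≥0∞)⁻¹) :
    condEnt μ M₁ M₀ = Real.log 2 := by
  rw [condEnt, ent_pair_of_uniform_pair μ hM,
    ent_eq_log_card_of_uniform μ M₀ (measure_preimage_fst_of_uniform_pair μ hM),
    show (4 : ℝ) = 2 * 2 by norm_num, Real.log_mul two_ne_zero two_ne_zero]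
  simp

lemma ent_snd_of_uniform_pair [IsProbabilityMeasure μ]
    (hM : ∀ a b : ZMod 2, μ {ω | M₀ ω = a ∧ M₁ ω = b} = (4 : ℝ≥0∞)⁻¹) :
    ent μ M₁ = Real.log 2 := by
  have hM' : ∀ a b : ZMod 2, μ {ω | M₁ ω = a ∧ M₀ ω = b} = (4 : ℝ≥0∞)⁻¹ := fun a b => by
    simpa only [and_comm] using hM b a
  simpa using ent_eq_log_card_of_uniform μ M₁ (measure_preimage_fst_of_uniform_pair μ hM')

end UniformBits

/-- the set checker lemma for a physical memory array.
Here `Z i j = M_{θ i + j} ⊕ η i j` (indices of `M` in `ZMod 2`, so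
`1 − θᵢ = θᵢ + 1`). -/
theorem stmt16 {Ω : Type*} [MeasurableSpace Ω] (μ : Measure Ω) [IsProbabilityMeasure μ]
    (n : ℕ) (M₀ M₁ : Ω → ZMod 2)
    (hM : ∀ a b : ZMod 2, μ {ω | M₀ ω = a ∧ M₁ ω = b} = (4 : ℝ≥0∞)⁻¹)
    (θ : Fin n → ZMod 2) (η : Fin n → ZMod 2 → ZMod 2)
    (Z : Fin n → ZMod 2 → Ω → ZMod 2)
    (hZ : ∀ (i : Fin n) (j : ZMod 2) (ω : Ω),
      Z i j ω = (if θ i + j = 0 then M₀ ω else M₁ ω) + η i j)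
    (a : Fin n → ZMod 2) :
    condEnt μ M₁ (fun ω => fun i : Fin n => Z i (a i) ω) = 0 ↔ θ ≠ a := by
  by_cases hθa : θ = a
  · subst hθa
    have hY : (fun ω => fun i => Z i (θ i) ω) = fun ω => fun i => M₀ ω + η i (θ i) := by
      ext ω i
      simp [hZ, CharTwo.add_self_eq_zero]
    have hcond : condEnt μ M₁ (fun ω => fun i => Z i (θ i) ω) = Real.log 2 := by
      rw [hY]
      rcases isEmpty_or_nonempty (Fin n) with _ | ⟨⟨i⟩⟩
      · rw [condEnt_of_subsingleton, ent_snd_of_uniform_pair μ hM]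
      · have hinj : Function.Injective fun (m : ZMod 2) (i : Fin n) => m + η i (θ i) :=
          fun m m' h => add_right_cancel (congrFun h i)
        rw [condEnt_comp_of_injective μ M₁ M₀ hinj, condEnt_of_uniform_pair μ hM]
    simpa [hcond] using (Real.log_pos one_lt_two).ne'
  · obtain ⟨i, hi⟩ := Function.ne_iff.1 hθa
    refine iff_of_true
      (condEnt_eq_zero_of_eq_comp μ _ _ (fun y => y i + η i (a i)) fun ω => ?_) hθa
    simp [hZ, CharTwo.add_eq_zero.not.2 hi, add_assoc, CharTwo.add_self_eq_zero]
end
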